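/- In the Stalemate-revisited causal Kripke setting, each of the primitive events (p1,w1) = 1 and (p2,w1) = 1 is an actual cause of r = 1 at world w0 by the ORIGINAL and the UPDATED HP definitions; hence the modified HP definition does not coincide with the original and updated HP definitions in causal Kripke models. -/

import Mathlib

open Classical

noncomputable section

/-- A causal Kripke model `K = (S, W, Rel, F)`: the signature `S` consists of the disjoint
finite sets `Exo` of exogenous and `Endo` of endogenous variables together with a finite
nonempty range `range Γ w` of possible values for each variable `Γ` at each world `w`;
`World` is a finite set of possible worlds, `Rel` is the accessibility relation, and `eqs`
assigns to each endogenous variable `X` and world `w` a structural equation computing the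
value of `(X,w)` from the values of all the other variables (it does not depend on the
coordinate `(X,w)` itself, and its value lies in the range of `(X,w)`). -/
structure CKM where
  Exo : Type
  Endo : Type
  World : Type
  Val : Type
  exoFin : Fintype Exo
  endoFin : Fintype Endo
  worldFin : Fintype World
  Rel : World → World → Prop
  range : (Exo ⊕ Endo) → World → Finset Val
  range_nonempty : ∀ Γ w, (range Γ w).Nonempty
  eqs : Endo → World → (((Exo ⊕ Endo) × World) → Val) → Val
  eqs_mem : ∀ X w g, eqs X w g ∈ range (Sum.inr X) w
  eqs_indep : ∀ X w g g',
    (∀ p, p ≠ (Sum.inr X, w) → g p = g' p) → eqs X w g = eqs X w g'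

namespace CKM

/-- A context assigns to every exogenous variable at every world a value in its range. -/
def ValidContext (K : CKM) (t : K.Exo → K.World → K.Val) : Prop :=
  ∀ U w, t U w ∈ K.range (Sum.inl U) w

/-- `v` is a solution of the causal Kripke setting `(K, t)`: it agrees with the context `t`
on all exogenous variables and satisfies all structural equations. -/
def Solves (K : CKM) (t : K.Exo → K.World → K.Val)
    (v : ((K.Exo ⊕ K.Endo) × K.World) → K.Val) : Prop :=
  (∀ U w, v (Sum.inl U, w) = t U w) ∧ ∀ X w, v (Sum.inr X, w) = K.eqs X w v

/-- The variable `p` influences the (endogenous) variable `q` (i.e. `q` directly causally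
depends on `p`): some change in the value of `p`, keeping all other variables fixed
(within their ranges), changes the value of the structural equation of `q`. -/
def Influences (K : CKM) (p q : (K.Exo ⊕ K.Endo) × K.World) : Prop :=
  ∃ X w, q = (Sum.inr X, w) ∧
    ∃ g g', (∀ r, g r ∈ K.range r.1 r.2) ∧ (∀ r, g' r ∈ K.range r.1 r.2) ∧
      (∀ r, r ≠ p → g r = g' r) ∧ K.eqs X w g ≠ K.eqs X w g'

/-- A causal Kripke model is recursive if it contains no cyclic dependencies. -/
def Recursive (K : CKM) : Prop :=
  ∀ p, ¬ Relation.TransGen K.Influences p p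

/-- The causal Kripke model obtained from `K` by the intervention setting the variables in
`dom` to the values prescribed by `val`. -/
def doInt (K : CKM) (dom : Finset (K.Endo × K.World)) (val : K.Endo × K.World → K.Val) :
    CKM :=
  { K with
    eqs := fun X w g =>
      if (X, w) ∈ dom ∧ val (X, w) ∈ K.range (Sum.inr X) w then val (X, w)
      else K.eqs X w g
    eqs_mem := by
      intro X w g
      by_cases h : (X, w) ∈ dom ∧ val (X, w) ∈ K.range (Sum.inr X) w
      · simp only [if_pos h]; exact h.2
      · simp only [if_neg h]; exact K.eqs_mem X w g
    eqs_indep := by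
      intro X w g g' hgg'
      by_cases h : (X, w) ∈ dom ∧ val (X, w) ∈ K.range (Sum.inr X) w
      · simp only [if_pos h]
      · simp only [if_neg h]; exact K.eqs_indep X w g g' hgg' }

end CKM

/-- Events (modal-Boolean combinations of primitive events): primitive events `X = x` and
`(X,w) = x`, negation, conjunction and the modal operator `□`. -/
inductive Event (E W V : Type) : Type
  | eq : E → V → Event E W V
  | eqAt : E → W → V → Event E W V
  | neg : Event E W V → Event E W V
  | conj : Event E W V → Event E W V → Event E W V
  | box : Event E W V → Event E W V

namespace CKM

/-- Satisfaction of an event at a world of `K`, relative to a solution `v` of the setting. -/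
def SatE (K : CKM) (v : ((K.Exo ⊕ K.Endo) × K.World) → K.Val) :
    K.World → Event K.Endo K.World K.Val → Prop
  | w, .eq X x => v (Sum.inr X, w) = x
  | _, .eqAt X w' x => v (Sum.inr X, w') = x
  | w, .neg α => ¬ SatE K v w α
  | w, .conj α β => SatE K v w α ∧ SatE K v w β
  | w, .box α => ∀ w', K.Rel w w' → SatE K v w' α

/-- `(K,t,w) ⊩ [dom ← val] α` : the event `α` holds at `w` in the model obtained from the
intervention `dom ← val`, in the context `t`. -/
def SatI (K : CKM) (t : K.Exo → K.World → K.Val) (dom : Finset (K.Endo × K.World))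
    (val : K.Endo × K.World → K.Val) (w : K.World) (α : Event K.Endo K.World K.Val) :
    Prop :=
  ∀ v, (K.doInt dom val).Solves t v → (K.doInt dom val).SatE v w α

/-- AC1 : `α` actually holds at `w`, and each conjunct `(X_i, w_j) = y_ij` of `Y = y`
actually holds. -/
def AC1 (K : CKM) (t : K.Exo → K.World → K.Val) (w : K.World)
    (Y : Finset (K.Endo × K.World)) (y : K.Endo × K.World → K.Val)
    (α : Event K.Endo K.World K.Val) : Prop :=
  ∀ v, K.Solves t v → K.SatE v w α ∧ ∀ p ∈ Y, v (Sum.inr p.1, p.2) = y p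

/-- AC2a together with AC2bᵒ (they share the partition `Z`, `N` and the setting `n`):
there is a partition of the endogenous variables into `Z ⊇ Y` and `N` and settings `y'`
of `Y` and `n` of `N` such that `(K,t,w) ⊩ [Y ← y', N ← n] ¬α`, and, where `z*` are the
actual values of the variables of `Z`, for every subset `Z'` of `Z \ Y`,
`(K,t,w) ⊩ [Y ← y, N ← n, Z' ← z'*] α`. -/
def AC2o (K : CKM) (t : K.Exo → K.World → K.Val) (w : K.World)
    (Y : Finset (K.Endo × K.World)) (y : K.Endo × K.World → K.Val)
    (α : Event K.Endo K.World K.Val) : Prop :=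
  ∃ Z N : Finset (K.Endo × K.World), ∃ y' n : K.Endo × K.World → K.Val,
    Y ⊆ Z ∧ Disjoint Z N ∧ (∀ p : K.Endo × K.World, p ∈ Z ∨ p ∈ N) ∧
    (∀ p ∈ Y, y' p ∈ K.range (Sum.inr p.1) p.2) ∧
    (∀ p ∈ N, n p ∈ K.range (Sum.inr p.1) p.2) ∧
    K.SatI t (Y ∪ N) (fun p => if p ∈ Y then y' p else n p) w (.neg α) ∧
    ∀ v, K.Solves t v → ∀ Z' ⊆ Z \ Y,
      K.SatI t (Y ∪ N ∪ Z')
        (fun p => if p ∈ Y then y p else if p ∈ N then n p else v (Sum.inr p.1, p.2)) w α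

/-- AC2a together with AC2bᵘ (updated definition): as in `AC2o`, but moreover the
restoration of the actual values `z'*` must keep `α` true for every subset `N'` of `N`. -/
def AC2u (K : CKM) (t : K.Exo → K.World → K.Val) (w : K.World)
    (Y : Finset (K.Endo × K.World)) (y : K.Endo × K.World → K.Val)
    (α : Event K.Endo K.World K.Val) : Prop :=
  ∃ Z N : Finset (K.Endo × K.World), ∃ y' n : K.Endo × K.World → K.Val,
    Y ⊆ Z ∧ Disjoint Z N ∧ (∀ p : K.Endo × K.World, p ∈ Z ∨ p ∈ N) ∧
    (∀ p ∈ Y, y' p ∈ K.range (Sum.inr p.1) p.2) ∧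
    (∀ p ∈ N, n p ∈ K.range (Sum.inr p.1) p.2) ∧
    K.SatI t (Y ∪ N) (fun p => if p ∈ Y then y' p else n p) w (.neg α) ∧
    ∀ v, K.Solves t v → ∀ Z' ⊆ Z \ Y, ∀ N' ⊆ N,
      K.SatI t (Y ∪ N' ∪ Z')
        (fun p => if p ∈ Y then y p else if p ∈ N' then n p else v (Sum.inr p.1, p.2)) w α

/-- AC2aᵐ (modified definition): there are a set `N` of endogenous variables and a setting
`y'` of the variables in `Y` such that, where `n*` are the actual values of the variables
in `N`, `(K,t,w) ⊩ [Y ← y', N ← n*] ¬α`. -/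
def AC2m (K : CKM) (t : K.Exo → K.World → K.Val) (w : K.World)
    (Y : Finset (K.Endo × K.World)) (y : K.Endo × K.World → K.Val)
    (α : Event K.Endo K.World K.Val) : Prop :=
  ∃ N : Finset (K.Endo × K.World), ∃ y' : K.Endo × K.World → K.Val,
    (∀ p ∈ Y, y' p ∈ K.range (Sum.inr p.1) p.2) ∧
    ∀ v, K.Solves t v →
      K.SatI t (Y ∪ N)
        (fun p => if p ∈ Y then y' p else v (Sum.inr p.1, p.2)) w (.neg α)

/-- `Y = y` is an actual cause of `α` in `(K,t)` at `w` by the ORIGINAL HP definition. -/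
def IsCauseO (K : CKM) (t : K.Exo → K.World → K.Val) (w : K.World)
    (Y : Finset (K.Endo × K.World)) (y : K.Endo × K.World → K.Val)
    (α : Event K.Endo K.World K.Val) : Prop :=
  K.AC1 t w Y y α ∧ K.AC2o t w Y y α ∧
    ∀ Y' ⊂ Y, ∀ y'' : K.Endo × K.World → K.Val,
      ¬ (K.AC1 t w Y' y'' α ∧ K.AC2o t w Y' y'' α)

/-- `Y = y` is an actual cause of `α` in `(K,t)` at `w` by the UPDATED HP definition. -/
def IsCauseU (K : CKM) (t : K.Exo → K.World → K.Val) (w : K.World)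
    (Y : Finset (K.Endo × K.World)) (y : K.Endo × K.World → K.Val)
    (α : Event K.Endo K.World K.Val) : Prop :=
  K.AC1 t w Y y α ∧ K.AC2u t w Y y α ∧
    ∀ Y' ⊂ Y, ∀ y'' : K.Endo × K.World → K.Val,
      ¬ (K.AC1 t w Y' y'' α ∧ K.AC2u t w Y' y'' α)

/-- `Y = y` is an actual cause of `α` in `(K,t)` at `w` by the MODIFIED HP definition. -/
def IsCauseM (K : CKM) (t : K.Exo → K.World → K.Val) (w : K.World)
    (Y : Finset (K.Endo × K.World)) (y : K.Endo × K.World → K.Val)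
    (α : Event K.Endo K.World K.Val) : Prop :=
  K.AC1 t w Y y α ∧ K.AC2m t w Y y α ∧
    ∀ Y' ⊂ Y, ∀ y'' : K.Endo × K.World → K.Val,
      ¬ (K.AC1 t w Y' y'' α ∧ K.AC2m t w Y' y'' α)

/-- `(X,w) = x` is part of a cause of `α` in `(K,t)` at `w'` by the original HP
definition: it is a conjunct of some actual cause `Y = y` of `α` at `w'`. -/
def PartOfCauseO (K : CKM) (t : K.Exo → K.World → K.Val) (w' : K.World)
    (X : K.Endo) (w : K.World) (x : K.Val) (α : Event K.Endo K.World K.Val) : Prop :=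
  ∃ Y y, K.IsCauseO t w' Y y α ∧ (X, w) ∈ Y ∧ y (X, w) = x

/-- `(X,w) = x` is part of a cause of `α` in `(K,t)` at `w'` by the updated HP
definition. -/
def PartOfCauseU (K : CKM) (t : K.Exo → K.World → K.Val) (w' : K.World)
    (X : K.Endo) (w : K.World) (x : K.Val) (α : Event K.Endo K.World K.Val) : Prop :=
  ∃ Y y, K.IsCauseU t w' Y y α ∧ (X, w) ∈ Y ∧ y (X, w) = x

/-- `(X,w) = x` is part of a cause of `α` in `(K,t)` at `w'` by the modified HP
definition. -/
def PartOfCauseM (K : CKM) (t : K.Exo → K.World → K.Val) (w' : K.World)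
    (X : K.Endo) (w : K.World) (x : K.Val) (α : Event K.Endo K.World K.Val) : Prop :=
  ∃ Y y, K.IsCauseM t w' Y y α ∧ (X, w) ∈ Y ∧ y (X, w) = x

end CKM

/-- Exogenous variables of the Stalemate-revisited example: `U = (U1, U2, U3)`. -/
inductive SrExo : Type
  | u1 | u2 | u3
deriving DecidableEq

instance instFintypeSrExo : Fintype SrExo :=
  ⟨{SrExo.u1, SrExo.u2, SrExo.u3}, fun x => by cases x <;> simp⟩

/-- Endogenous variables of the Stalemate-revisited example: `p1` = "the king is in check
by the opponent's queen", `p2` = "the king is in check by the opponent's king", `q` = "the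
king and the knight are the only pieces that can move", `r` = "the player is forced to
move the knight". -/
inductive SrEndo : Type
  | p1 | p2 | q | r
deriving DecidableEq

instance instFintypeSrEndo : Fintype SrEndo :=
  ⟨{SrEndo.p1, SrEndo.p2, SrEndo.q, SrEndo.r}, fun x => by cases x <;> simp⟩

/-- The Stalemate-revisited causal Kripke model: worlds `w0, w1, w2` (as `Fin 3`),
accessibility `Rel = {(w0,w1), (w0,w2)}`, binary variables with `(p1,w) = (U1,w)`,
`(p2,w) = (U2,w)`, `(q,w) = (U3,w)` and `r = ¬(p1 ∨ p2) ∧ q ∧ □(p1 ∨ p2)`. -/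
@[reducible] def stRevisited : CKM where
  Exo := SrExo
  Endo := SrEndo
  World := Fin 3
  Val := Bool
  exoFin := inferInstance
  endoFin := inferInstance
  worldFin := inferInstance
  Rel := fun a b => a = 0 ∧ b ≠ 0
  range := fun _ _ => Finset.univ
  range_nonempty := fun _ _ => ⟨true, Finset.mem_univ _⟩
  eqs := fun X w g =>
    match X with
    | .p1 => g (Sum.inl SrExo.u1, w)
    | .p2 => g (Sum.inl SrExo.u2, w)
    | .q => g (Sum.inl SrExo.u3, w)
    | .r =>
        if (¬ (g (Sum.inr SrEndo.p1, w) = true ∨ g (Sum.inr SrEndo.p2, w) = true)) ∧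
            g (Sum.inr SrEndo.q, w) = true ∧
            ∀ w' : Fin 3, ((w : Fin 3) = 0 ∧ w' ≠ 0) →
              (g (Sum.inr SrEndo.p1, w') = true ∨ g (Sum.inr SrEndo.p2, w') = true)
        then true else false
  eqs_mem := fun _ _ _ => Finset.mem_univ _
  eqs_indep := by
    intro X w g g' h
    cases X with
    | p1 => exact h (Sum.inl SrExo.u1, w) (by simp)
    | p2 => exact h (Sum.inl SrExo.u2, w) (by simp)
    | q => exact h (Sum.inl SrExo.u3, w) (by simp)
    | r =>
      refine if_congr ?_ rfl rfl
      have hp1 : ∀ w' : Fin 3, g (Sum.inr SrEndo.p1, w') = g' (Sum.inr SrEndo.p1, w') :=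
        fun w' => h _ (by simp)
      have hp2 : ∀ w' : Fin 3, g (Sum.inr SrEndo.p2, w') = g' (Sum.inr SrEndo.p2, w') :=
        fun w' => h _ (by simp)
      have hq : g (Sum.inr SrEndo.q, w) = g' (Sum.inr SrEndo.q, w) := h _ (by simp)
      simp only [hp1, hp2, hq]

/-- The context of the Stalemate-revisited example: `U = (U1,U2,U3)` is set to `(0,0,1)`
at `w0`, `(1,1,1)` at `w1` and `(0,1,0)` at `w2`. -/
def stRevisitedCtx : SrExo → Fin 3 → Bool := fun U w =>
  match U with
  | SrExo.u1 => decide (w = 1)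
  | SrExo.u2 => decide (w = 1 ∨ w = 2)
  | SrExo.u3 => decide (w = 0 ∨ w = 1)

/-!
Every intervention on this model has exactly one solution: `p1`, `p2`, `q` copy the context
unless intervened on, and `r` reads them. At `w0`, `r = 1` holds because `□(p1 ∨ p2)` does,
and at `w1` both `p1` and `p2` are true, so each of them is redundant given the other. The
original and updated definitions may freeze the other one at the non-actual value `0` in the
contingency, after which setting `(p1,w1)` (resp. `(p2,w1)`) to `0` falsifies `r`; the modified
definition may only freeze variables at their actual values, under which `r` survives.
Minimality is automatic for a single conjunct, since the empty set never satisfies AC2.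
-/

namespace CKM

variable (K : CKM)

def Solvable (t : K.Exo → K.World → K.Val) : Prop :=
  ∀ dom val, ∃ v, (K.doInt dom val).Solves t v

variable {K} {t : K.Exo → K.World → K.Val} {dom : Finset (K.Endo × K.World)}
  {val val' : K.Endo × K.World → K.Val} {v : (K.Exo ⊕ K.Endo) × K.World → K.Val}
  {w : K.World} {α : Event K.Endo K.World K.Val}

theorem satE_doInt : (K.doInt dom val).SatE v w α ↔ K.SatE v w α := by
  induction α generalizing w with
  | neg α ih => exact not_congr ih
  | conj α β ihα ihβ => exact and_congr ihα ihβ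
  | box α ih => exact forall_congr' fun w' => imp_congr_right fun _ => ih
  | _ => exact Iff.rfl

theorem solves_doInt_congr (h : ∀ p ∈ dom, val p = val' p) :
    (K.doInt dom val).Solves t v ↔ (K.doInt dom val').Solves t v := by
  refine and_congr_right fun _ => forall₂_congr fun (X : K.Endo) (w : K.World) => ?_
  by_cases hm : (X, w) ∈ dom
  · simp only [doInt, hm, h _ hm, true_and]
  · simp only [doInt, hm, false_and, if_false]

theorem satI_congr (h : ∀ p ∈ dom, val p = val' p) :
    K.SatI t dom val w α ↔ K.SatI t dom val' w α :=
  forall_congr' fun _ => imp_congr (solves_doInt_congr h) (satE_doInt.trans satE_doInt.symm)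

theorem solves_doInt_empty : (K.doInt ∅ val).Solves t v ↔ K.Solves t v := by
  simp [Solves, doInt]

theorem satI_iff_of_unique (h : ∀ v', (K.doInt dom val).Solves t v' ↔ v' = v) :
    K.SatI t dom val w α ↔ K.SatE v w α :=
  ⟨fun hs => satE_doInt.1 (hs v ((h v).2 rfl)),
    fun hs v' hv' => (h v').1 hv' ▸ satE_doInt.2 hs⟩

theorem AC2u.ac2o {Y y} (h : K.AC2u t w Y y α) : K.AC2o t w Y y α :=
  let ⟨Z, N, y', n, hYZ, hZN, hcov, hy', hn, hneg, hpos⟩ := h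
  ⟨Z, N, y', n, hYZ, hZN, hcov, hy', hn, hneg, fun v hv Z' hZ' => hpos v hv Z' hZ' N le_rfl⟩

/-- With `Y = ∅` the contingency `N ← n` would have to make `α` both false (AC2a) and true
(AC2bᵒ with `Z' = ∅`). -/
theorem not_AC2o_empty {y} (hK : K.Solvable t) : ¬ K.AC2o t w ∅ y α := by
  rintro ⟨Z, N, y', n, -, -, -, -, -, hneg, hpos⟩
  obtain ⟨v₀, hv₀⟩ := hK ∅ y
  have hα := hpos v₀ (solves_doInt_empty.1 hv₀) ∅ (Finset.empty_subset _)
  rw [Finset.union_empty, satI_congr (val' := fun p => if p ∈ (∅ : Finset _) then y' p else n p)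
    fun p hp => by simp_all] at hα
  obtain ⟨v, hv⟩ := hK (∅ ∪ N) (fun p => if p ∈ (∅ : Finset _) then y' p else n p)
  exact hneg v hv (hα v hv)

theorem not_AC2u_empty {y} (hK : K.Solvable t) : ¬ K.AC2u t w ∅ y α :=
  fun h => not_AC2o_empty hK h.ac2o

theorem isCauseO_singleton {p y} (h1 : K.AC1 t w {p} y α) (h2 : K.AC2o t w {p} y α)
    (hK : K.Solvable t) : K.IsCauseO t w {p} y α :=
  ⟨h1, h2, fun _ hY _ h => not_AC2o_empty hK (Finset.ssubset_singleton_iff.1 hY ▸ h.2)⟩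

theorem isCauseU_singleton {p y} (h1 : K.AC1 t w {p} y α) (h2 : K.AC2u t w {p} y α)
    (hK : K.Solvable t) : K.IsCauseU t w {p} y α :=
  ⟨h1, h2, fun _ hY _ h => not_AC2u_empty hK (Finset.ssubset_singleton_iff.1 hY ▸ h.2)⟩

theorem recursive_of_lt_rank (rank : (K.Exo ⊕ K.Endo) × K.World → ℕ)
    (h : ∀ p q, K.Influences p q → rank p < rank q) : K.Recursive := fun _ hp =>
  lt_irrefl _ <|
    Relation.transGen_eq_self (r := ((· < ·) : ℕ → ℕ → Prop)) ▸ hp.lift rank h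

end CKM

namespace StRevisited

abbrev Pt := SrEndo × Fin 3

abbrev Assignment := (SrExo ⊕ SrEndo) × Fin 3 → Bool

def actual : Pt → Bool
  | (.p1, w) => decide (w = 1)
  | (.p2, w) => decide (w = 1 ∨ w = 2)
  | (.q, w) => decide (w = 0 ∨ w = 1)
  | (.r, w) => decide (w = 0)

/-- The solution of the intervention `dom ← val` on every variable except `r`. -/
def baseSol (dom : Finset Pt) (val : Pt → Bool) : Assignment
  | (.inl U, w) => stRevisitedCtx U w
  | (.inr X, w) => if (X, w) ∈ dom then val (X, w) else actual (X, w)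

variable {dom : Finset Pt} {val : Pt → Bool}

theorem solves_doInt_iff {v : Assignment} :
    (stRevisited.doInt dom val).Solves stRevisitedCtx v ↔
      (∀ U w, v (.inl U, w) = stRevisitedCtx U w) ∧ ∀ (X : SrEndo) (w : Fin 3),
        v (.inr X, w) = if (X, w) ∈ dom then val (X, w) else stRevisited.eqs X w v := by
  simp [CKM.Solves, CKM.doInt]

def sol (dom : Finset Pt) (val : Pt → Bool) : Assignment
  | (.inr .r, w) => if (.r, w) ∈ dom then val (.r, w) else stRevisited.eqs .r w (baseSol dom val)
  | p => baseSol dom val p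

theorem sol_eq_baseSol {X : SrEndo} (hX : X ≠ .r) (w : Fin 3) :
    sol dom val (.inr X, w) = baseSol dom val (.inr X, w) := by
  cases X <;> first | rfl | exact absurd rfl hX

theorem eqs_r_congr {w : Fin 3} {g g' : Assignment}
    (h : ∀ X, X ≠ SrEndo.r → ∀ w', g (.inr X, w') = g' (.inr X, w')) :
    stRevisited.eqs .r w g = stRevisited.eqs .r w g' := by
  simp only [h .p1 (by decide), h .p2 (by decide), h .q (by decide)]

theorem solves_iff {v : Assignment} :
    (stRevisited.doInt dom val).Solves stRevisitedCtx v ↔ v = sol dom val := by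
  rw [solves_doInt_iff]
  constructor
  · rintro ⟨hexo, hendo⟩
    have hbase : ∀ X, X ≠ SrEndo.r → ∀ w, v (.inr X, w) = baseSol dom val (.inr X, w) := by
      intro X hX w
      rw [hendo X w]
      cases X <;> simp_all [baseSol, actual, stRevisitedCtx]
    funext ⟨x, w⟩
    rcases x with U | X
    · exact hexo U w
    · by_cases hX : X = .r
      · subst hX
        rw [hendo .r w, eqs_r_congr hbase]
        rfl
      · rw [hbase X hX w, sol_eq_baseSol hX]
  · rintro rfl
    refine ⟨fun U w => rfl, fun X w => ?_⟩
    by_cases hX : X = .r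
    · subst hX
      rw [eqs_r_congr fun X hX w => sol_eq_baseSol hX w]
      rfl
    · rw [sol_eq_baseSol hX]
      cases X <;> simp_all [baseSol, actual, stRevisitedCtx, sol]

theorem solvable : stRevisited.Solvable stRevisitedCtx :=
  fun _ _ => ⟨_, solves_iff.2 rfl⟩

theorem satI_iff {w : Fin 3} {α : Event SrEndo (Fin 3) Bool} :
    stRevisited.SatI stRevisitedCtx dom val w α ↔ stRevisited.SatE (sol dom val) w α :=
  CKM.satI_iff_of_unique fun _ => solves_iff

theorem baseSol_of_agrees {p : Pt} (h : p ∈ dom → val p = actual p) :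
    baseSol dom val (.inr p.1, p.2) = actual p := by
  by_cases hp : p ∈ dom <;> simp [baseSol, hp, h]

theorem sol_r_zero_of_w1_false (hp1 : (SrEndo.p1, 1) ∈ dom) (hp2 : (SrEndo.p2, 1) ∈ dom)
    (hv1 : val (.p1, 1) = false) (hv2 : val (.p2, 1) = false) (hr : (SrEndo.r, 0) ∉ dom) :
    sol dom val (.inr .r, 0) = false := by
  simp only [sol, if_neg hr]
  rw [if_neg]
  rintro ⟨-, -, hbox⟩
  simpa [baseSol, hp1, hp2, hv1, hv2] using hbox 1

/-- Whichever of `(p1,w1)`, `(p2,w1)` is not `o` still witnesses `p1 ∨ p2` at `w1`. -/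
theorem sol_r_zero_of_agrees_except {o : Pt} (ho : o = (.p1, 1) ∨ o = (.p2, 1))
    (h : ∀ p ∈ dom, p ≠ o → val p = actual p) : sol dom val (.inr .r, 0) = true := by
  have hb : ∀ p : Pt, p ≠ o → baseSol dom val (.inr p.1, p.2) = actual p :=
    fun p hp => baseSol_of_agrees (h p · hp)
  have hb' : ∀ p : Pt, p.2 ≠ 1 → baseSol dom val (.inr p.1, p.2) = actual p := by
    refine fun p hp => hb p ?_
    rintro rfl
    rcases ho with rfl | rfl <;> exact hp rfl
  by_cases hrd : (SrEndo.r, 0) ∈ dom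
  · simp only [sol, if_pos hrd, h _ hrd (by rcases ho with rfl | rfl <;> decide)]
    rfl
  simp only [sol, if_neg hrd]
  rw [if_pos]
  refine ⟨?_, hb' (.q, 0) (by decide), fun w' hw' => ?_⟩
  · rw [hb' (.p1, 0) (by decide), hb' (.p2, 0) (by decide)]
    decide
  fin_cases w'
  · exact absurd rfl hw'.2
  · rcases ho with rfl | rfl
    · exact .inr (hb (.p2, 1) (by decide))
    · exact .inl (hb (.p1, 1) (by decide))
  · exact .inr (hb' (.p2, 2) (by decide))

theorem actual_spec {v : Assignment} (hv : stRevisited.Solves stRevisitedCtx v) (p : Pt) :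
    v (.inr p.1, p.2) = actual p := by
  obtain rfl := solves_iff.1 (CKM.solves_doInt_empty (val := fun _ => false) |>.2 hv)
  obtain ⟨X, w⟩ := p
  cases X <;> fin_cases w <;> simp [sol, baseSol, actual, Fin.forall_fin_succ]

theorem ac1_of_actual {c : Pt} (hc : actual c = true) :
    stRevisited.AC1 stRevisitedCtx 0 {c} (fun _ => true) (.eq .r true) := fun _ hv =>
  ⟨actual_spec hv (.r, 0),
    fun _ hp => Finset.mem_singleton.1 hp ▸ (actual_spec hv c).trans hc⟩

/-- Witness: `Z = {c, (r,w0)}`, and the contingency on `N = Zᶜ` sets the other check `o` to `0`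
and everything else to its actual value. -/
theorem ac2u_check_w1 {c o : Pt}
    (hco : c = (.p1, 1) ∧ o = (.p2, 1) ∨ c = (.p2, 1) ∧ o = (.p1, 1)) :
    stRevisited.AC2u stRevisitedCtx 0 {c} (fun _ => true) (.eq .r true) := by
  have ho : o = (.p1, 1) ∨ o = (.p2, 1) := by rcases hco with ⟨-, rfl⟩ | ⟨-, rfl⟩ <;> simp
  have hc : actual c = true := by rcases hco with ⟨rfl, -⟩ | ⟨rfl, -⟩ <;> rfl
  refine ⟨{c, (.r, 0)}, {c, (.r, 0)}ᶜ, fun _ => false, Function.update actual o false,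
    by simp, Finset.disjoint_left.2 fun _ h h' => Finset.mem_compl.1 h' h,
    fun _ => (Classical.em _).imp_right Finset.mem_compl.2,
    fun _ _ => Finset.mem_univ _, fun _ _ => Finset.mem_univ _, ?_, ?_⟩
  · rw [satI_iff]
    change ¬ sol _ _ (.inr .r, 0) = true
    rcases hco with ⟨rfl, rfl⟩ | ⟨rfl, rfl⟩ <;>
      rw [sol_r_zero_of_w1_false (by simp) (by simp) (by simp) (by simp) (by simp)] <;>
      decide
  · intro v hv Z' _ N' _
    rw [satI_iff]
    refine sol_r_zero_of_agrees_except ho fun p _ hpo => ?_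
    split_ifs with hpc hpN
    · rw [Finset.mem_singleton.1 hpc, hc]
    · exact Function.update_of_ne hpo _ _
    · exact actual_spec hv p

theorem not_ac2m_p1 :
    ¬ stRevisited.AC2m stRevisitedCtx 0 {(.p1, 1)} (fun _ => true) (.eq .r true) := by
  rintro ⟨N, y', -, h⟩
  have hact : stRevisited.Solves stRevisitedCtx (sol ∅ fun _ => false) :=
    CKM.solves_doInt_empty.1 (solves_iff.2 rfl)
  refine satI_iff.1 (h _ hact) (sol_r_zero_of_agrees_except (.inl rfl) fun p _ hpo => ?_)
  simp only [Finset.mem_singleton, hpo, if_false]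
  exact actual_spec hact p

def rank : (SrExo ⊕ SrEndo) × Fin 3 → ℕ
  | (.inl _, _) => 0
  | (.inr .r, _) => 2
  | (.inr _, _) => 1

theorem rank_lt_of_influences {p q} (h : stRevisited.Influences p q) : rank p < rank q := by
  obtain ⟨X, w, rfl, g, g', -, -, hgg', hne⟩ := h
  obtain ⟨U | Y, w'⟩ := p
  · cases X <;> simp [rank]
  cases X with
  | r =>
    cases Y
    case r => exact absurd (eqs_r_congr fun Z hZ w'' => hgg' _ (by simp [hZ])) hne
    all_goals simp [rank]
  | _ => exact absurd (hgg' _ (by simp)) hne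

theorem recursive : stRevisited.Recursive :=
  CKM.recursive_of_lt_rank rank fun _ _ => rank_lt_of_influences

theorem isCauseO_and_isCauseU_check_w1 {c o : Pt}
    (hco : c = (.p1, 1) ∧ o = (.p2, 1) ∨ c = (.p2, 1) ∧ o = (.p1, 1)) :
    stRevisited.IsCauseO stRevisitedCtx 0 {c} (fun _ => true) (.eq .r true) ∧
      stRevisited.IsCauseU stRevisitedCtx 0 {c} (fun _ => true) (.eq .r true) := by
  have hc : actual c = true := by rcases hco with ⟨rfl, -⟩ | ⟨rfl, -⟩ <;> rfl
  exact ⟨CKM.isCauseO_singleton (ac1_of_actual hc) (ac2u_check_w1 hco).ac2o solvable,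
    CKM.isCauseU_singleton (ac1_of_actual hc) (ac2u_check_w1 hco) solvable⟩

end StRevisited

/-- In the Stalemate-revisited causal Kripke setting, each of the
primitive events `(p1,w1) = 1` and `(p2,w1) = 1` is an actual cause of `r = 1` at world
`w0` by the ORIGINAL and the UPDATED HP definitions; hence (as neither is a cause there by
the modified definition) the modified HP definition does not coincide with the original
and updated HP definitions in causal Kripke models. -/
theorem stRevisited_original_updated_causes :
    (stRevisited.IsCauseO stRevisitedCtx 0 {(SrEndo.p1, (1 : Fin 3))} (fun _ => true)
        (Event.eq SrEndo.r true) ∧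
      stRevisited.IsCauseU stRevisitedCtx 0 {(SrEndo.p1, (1 : Fin 3))} (fun _ => true)
        (Event.eq SrEndo.r true)) ∧
    (stRevisited.IsCauseO stRevisitedCtx 0 {(SrEndo.p2, (1 : Fin 3))} (fun _ => true)
        (Event.eq SrEndo.r true) ∧
      stRevisited.IsCauseU stRevisitedCtx 0 {(SrEndo.p2, (1 : Fin 3))} (fun _ => true)
        (Event.eq SrEndo.r true)) ∧
    -- hence the three definitions of causality need not coincide in causal Kripke models:
    ∃ (K : CKM) (t : K.Exo → K.World → K.Val) (w : K.World)
      (Y : Finset (K.Endo × K.World)) (y : K.Endo × K.World → K.Val)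
      (α : Event K.Endo K.World K.Val),
        K.Recursive ∧ K.ValidContext t ∧
        K.IsCauseO t w Y y α ∧ K.IsCauseU t w Y y α ∧ ¬ K.IsCauseM t w Y y α := by
  obtain ⟨hO1, hU1⟩ := StRevisited.isCauseO_and_isCauseU_check_w1 (.inl ⟨rfl, rfl⟩)
  exact ⟨⟨hO1, hU1⟩, StRevisited.isCauseO_and_isCauseU_check_w1 (.inr ⟨rfl, rfl⟩),
    stRevisited, stRevisitedCtx, 0, _, _, _, StRevisited.recursive, fun _ _ => Finset.mem_univ _,
    hO1, hU1, fun h => StRevisited.not_ac2m_p1 h.2.1⟩
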